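/- Let d: ℕ → ℕ with d(0)=0 and d(n) the n-th letter of E_∞, and a(n) = ∑_{j=0}^n d(j) (the s = 0 Conolly sequence). Then the formal power series ∑_{n≥1} d(n) z^n equals z · ∏_{n ≥ 1} (1 + z^(2^n - 1)), and ∑_{n≥0} a(n) z^n = (z · ∏_{n ≥ 1} (1 + z^(2^n - 1)))/(1 - z). -/

import Mathlib

/-- E_0 = "1", E_{n+1} = E_n ++ E_n ++ "0". -/
def Eword : ℕ → List ℕ
  | 0 => [1]
  | n + 1 => Eword n ++ Eword n ++ [0]

/-- d(0) = 0 and d(n) is the n-th letter (1-indexed) of the infinite word E_∞. -/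
def dword (n : ℕ) : ℕ := if n = 0 then 0 else (Eword n).getD (n - 1) 0

/-- a(n) = ∑_{j=0}^n d(j), the s = 0 Conolly sequence. -/
def aword (n : ℕ) : ℕ := ∑ j ∈ Finset.range (n + 1), dword j

/-!
Let `F_m = ∑ᵢ (E_m)ᵢ zⁱ⁺¹` be the polynomial spelling out the finite word `E_m`. Since
`E_{m+1} = E_m E_m 0` and `|E_m| = 2^(m+1) - 1`, we get `F_{m+1} = F_m (1 + z^(2^(m+1) - 1))`,
so `F_m = z ∏_{1 ≤ n ≤ m} (1 + z^(2^n - 1))`. Each `E_m` is a prefix of `E_∞`, so the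
coefficient of `z^k` in `F_k` is `d(k)`. The statement about `a` is the telescoping identity
`(∑_{j ≤ n} d(j)) - (∑_{j ≤ n-1} d(j)) = d(n)`.
-/

namespace PowerSeries

theorem mk_sum_range_mul_one_sub_X {R : Type*} [Ring R] (f : ℕ → R) :
    (mk fun n => ∑ j ∈ Finset.range (n + 1), f j) * (1 - X) = mk f := by
  ext n
  rcases n with _ | n
  · simp
  · rw [mul_sub, mul_one, map_sub, coeff_succ_mul_X, coeff_mk, coeff_mk, coeff_mk,
      Finset.sum_range_succ, add_sub_cancel_left]

end PowerSeries

open Polynomial Finset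

section WordPoly

variable {R : Type*} [CommSemiring R]

noncomputable def wordPoly (l : List ℕ) : R[X] :=
  ∑ i ∈ range l.length, C (l.getD i 0 : R) * X ^ (i + 1)

theorem coeff_wordPoly_zero (l : List ℕ) : (wordPoly l : R[X]).coeff 0 = 0 := by
  simp [wordPoly, coeff_X_pow]

theorem coeff_wordPoly_succ (l : List ℕ) (k : ℕ) :
    (wordPoly l : R[X]).coeff (k + 1) = l.getD k 0 := by
  simp only [wordPoly, finsetSum_coeff, coeff_C_mul, coeff_X_pow, add_left_inj, mul_ite,
    mul_one, mul_zero, sum_ite_eq, mem_range]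
  split_ifs with hk
  · rfl
  · rw [List.getD_eq_default _ _ (by omega), Nat.cast_zero]

theorem wordPoly_append (l₁ l₂ : List ℕ) :
    (wordPoly (l₁ ++ l₂) : R[X]) = wordPoly l₁ + X ^ l₁.length * wordPoly l₂ := by
  rw [wordPoly, List.length_append, sum_range_add, wordPoly, wordPoly, mul_sum]
  congr 1
  · refine sum_congr rfl fun i hi => ?_
    rw [List.getD_append _ _ _ _ (mem_range.mp hi)]
  · refine sum_congr rfl fun i _ => ?_
    rw [List.getD_append_right _ _ _ _ (by omega), Nat.add_sub_cancel_left]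
    ring

end WordPoly

theorem length_Eword (m : ℕ) : (Eword m).length = 2 ^ (m + 1) - 1 := by
  induction m with
  | zero => rfl
  | succ n ih =>
    have : 1 ≤ 2 ^ (n + 1) := Nat.one_le_two_pow
    simp only [Eword, List.length_append, ih, List.length_singleton, pow_succ]
    omega

theorem X_mul_prod_eq_wordPoly_Eword {R : Type*} [CommSemiring R] (m : ℕ) :
    (X * ∏ n ∈ Icc 1 m, (1 + X ^ (2 ^ n - 1)) : R[X]) = wordPoly (Eword m) := by
  induction m with
  | zero => simp [Eword, wordPoly]
  | succ n ih =>
    have zero_letter : (wordPoly [0] : R[X]) = 0 := by simp [wordPoly]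
    rw [prod_Icc_succ_top (by omega), ← mul_assoc, ih, Eword, List.append_assoc,
      wordPoly_append, wordPoly_append, zero_letter, length_Eword]
    ring

/-- ∑_{n≥1} d(n) z^n = z · ∏_{n ≥ 1} (1 + z^(2^n - 1)) and
    ∑_{n≥0} a(n) z^n = (z · ∏_{n ≥ 1} (1 + z^(2^n - 1)))/(1 - z).
    The infinite product is a legitimate formal product: its coefficient of z^k
    only involves the factors with 2^n - 1 ≤ k, so it equals the corresponding
    coefficient of the finite product over 1 ≤ n ≤ k.  The second identity is
    expressed by multiplying through by (1 - z). -/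
theorem dword_aword_generating_functions :
    (∀ k : ℕ, (dword k : ℚ)
        = (Polynomial.X *
            ∏ n ∈ Finset.Icc 1 k,
              (1 + Polynomial.X ^ (2 ^ n - 1)) : Polynomial ℚ).coeff k) ∧
      (PowerSeries.mk fun n => (aword n : ℚ)) * (1 - PowerSeries.X)
        = PowerSeries.mk fun n => (dword n : ℚ) := by
  refine ⟨fun k => ?_, ?_⟩
  · rw [X_mul_prod_eq_wordPoly_Eword]
    rcases k with _ | k
    · rw [coeff_wordPoly_zero]; rfl
    · rw [coeff_wordPoly_succ]; rfl
  · simpa [aword] using PowerSeries.mk_sum_range_mul_one_sub_X fun n => (dword n : ℚ)
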